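/- Simon normal form: for every 4×4 covariance matrix Γ (two modes) there exist matrices S₁, S₂ ∈ Sp(2,ℝ) and real numbers a, b, c, d such that (S₁ ⊕ S₂) Γ (S₁ᵀ ⊕ S₂ᵀ) = [[a,0,c,0],[0,a,0,d],[c,0,b,0],[0,d,0,b]], where S₁ ⊕ S₂ denotes the block-diagonal 4×4 matrix with blocks S₁ and S₂. -/

import Mathlib

open Matrix Polynomial
open ComplexOrder

noncomputable section

/-- The standard symplectic form matrix: block diagonal with 2×2 blocks [[0,1],[-1,0]]. -/
def symplForm (n : ℕ) : Matrix (Fin n) (Fin n) ℝ :=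
  Matrix.of fun i j =>
    if (i : ℕ) + 1 = (j : ℕ) ∧ (i : ℕ) % 2 = 0 then 1
    else if (j : ℕ) + 1 = (i : ℕ) ∧ (j : ℕ) % 2 = 0 then -1 else 0

/-- Membership in the real symplectic group: `S σ Sᵀ = σ`. -/
def IsSymplectic {n : ℕ} (S : Matrix (Fin n) (Fin n) ℝ) : Prop :=
  S * symplForm n * Sᵀ = symplForm n

/-- The Williamson diagonal matrix `diag(a₁,a₁,…,a_N,a_N)`. -/
def WDiag {N : ℕ} (a : Fin N → ℝ) : Matrix (Fin (2 * N)) (Fin (2 * N)) ℝ :=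
  Matrix.diagonal fun i => a ⟨(i : ℕ) / 2, by have := i.isLt; omega⟩

/-- A covariance matrix: real symmetric with `γ + iσ` positive semidefinite. -/
def IsCovMatrix {n : ℕ} (γ : Matrix (Fin n) (Fin n) ℝ) : Prop :=
  γ.IsSymm ∧
    (γ.map (Complex.ofReal) + Complex.I • (symplForm n).map Complex.ofReal).PosSemidef

/-- The block-diagonal direct sum of two square matrices. -/
def dirSum {m n : ℕ} (A : Matrix (Fin m) (Fin m) ℝ) (B : Matrix (Fin n) (Fin n) ℝ) :
    Matrix (Fin (m + n)) (Fin (m + n)) ℝ :=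
  Matrix.reindex finSumFinEquiv finSumFinEquiv (Matrix.fromBlocks A 0 0 B)

/-- Separability of a covariance matrix with respect to the split `A|B`. -/
def IsSepCov (nA nB : ℕ) (γ : Matrix (Fin (nA + nB)) (Fin (nA + nB)) ℝ) : Prop :=
  ∃ (γA : Matrix (Fin nA) (Fin nA) ℝ) (γB : Matrix (Fin nB) (Fin nB) ℝ),
    IsCovMatrix γA ∧ IsCovMatrix γB ∧ (γ - dirSum γA γB).PosSemidef

/-- Block-diagonal sum `S₁ ⊕ S₂` of two `2×2` matrices as a `4×4` matrix. -/
def twoDirSum (S₁ S₂ : Matrix (Fin 2) (Fin 2) ℝ) : Matrix (Fin 4) (Fin 4) ℝ :=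
  !![S₁ 0 0, S₁ 0 1, 0, 0;
     S₁ 1 0, S₁ 1 1, 0, 0;
     0, 0, S₂ 0 0, S₂ 0 1;
     0, 0, S₂ 1 0, S₂ 1 1]

/-! ### Auxiliary lemmas -/

lemma trans2 (a b c d : ℝ) : (!![a,b;c,d])ᵀ = !![a,c;b,d] := by
  ext i j; fin_cases i <;> fin_cases j <;> simp

lemma symplForm_two : symplForm 2 = !![0,1;-1,0] := by
  ext i j; fin_cases i <;> fin_cases j <;> simp [symplForm]

lemma symplForm_four : symplForm 4 = !![0,1,0,0;-1,0,0,0;0,0,0,1;0,0,-1,0] := by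
  ext i j; fin_cases i <;> fin_cases j <;> norm_num [symplForm, vecHead, vecTail]

lemma symp_of_det (S : Matrix (Fin 2) (Fin 2) ℝ) (h : S.det = 1) : IsSymplectic S := by
  have hd := h
  rw [Matrix.det_fin_two] at hd
  unfold IsSymplectic
  rw [symplForm_two]
  ext i j
  fin_cases i <;> fin_cases j <;>
    simp [Matrix.mul_apply, Fin.sum_univ_two, Matrix.transpose_apply] <;> linarith [hd]

def rot (c s : ℝ) : Matrix (Fin 2) (Fin 2) ℝ := !![c, -s; s, c]

lemma rot_orth {c s : ℝ} (h : c^2 + s^2 = 1) : rot c s * (rot c s)ᵀ = 1 := by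
  rw [rot, trans2, Matrix.mul_fin_two, Matrix.one_fin_two]
  ext i j; fin_cases i <;> fin_cases j <;> simp <;> nlinarith [h]

lemma rot_det {c s : ℝ} (h : c^2 + s^2 = 1) : (rot c s).det = 1 := by
  rw [rot, Matrix.det_fin_two_of]; nlinarith [h]

/-- symmetrization step -/
lemma sym_step (M : Matrix (Fin 2) (Fin 2) ℝ) :
    ∃ c s : ℝ, c^2 + s^2 = 1 ∧ (rot c s * M) 0 1 = (rot c s * M) 1 0 := by
  rcases eq_or_ne (Real.sqrt ((M 0 0 + M 1 1)^2 + (M 0 1 - M 1 0)^2)) 0 with hr | hr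
  · have h0 : (M 0 0 + M 1 1)^2 + (M 0 1 - M 1 0)^2 ≤ 0 := by
      by_contra hc
      push_neg at hc
      exact absurd hr (ne_of_gt (Real.sqrt_pos.mpr hc))
    have hv0 : M 0 1 - M 1 0 = 0 := by
      nlinarith [sq_nonneg (M 0 0 + M 1 1), sq_nonneg (M 0 1 - M 1 0)]
    refine ⟨1, 0, by norm_num, ?_⟩
    rw [Matrix.eta_fin_two M, rot, Matrix.mul_fin_two]
    simp
    linarith [hv0]
  · have hrpos : 0 < Real.sqrt ((M 0 0 + M 1 1)^2 + (M 0 1 - M 1 0)^2) :=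
      lt_of_le_of_ne (Real.sqrt_nonneg _) (Ne.symm hr)
    have hr2 : (Real.sqrt ((M 0 0 + M 1 1)^2 + (M 0 1 - M 1 0)^2))^2
        = (M 0 0 + M 1 1)^2 + (M 0 1 - M 1 0)^2 := Real.sq_sqrt (by positivity)
    refine ⟨(M 0 0 + M 1 1)/Real.sqrt ((M 0 0 + M 1 1)^2 + (M 0 1 - M 1 0)^2),
           (M 0 1 - M 1 0)/Real.sqrt ((M 0 0 + M 1 1)^2 + (M 0 1 - M 1 0)^2), ?_, ?_⟩
    · have hpos : 0 < (M 0 0 + M 1 1)^2 + (M 0 1 - M 1 0)^2 := Real.sqrt_pos.mp hrpos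
      rw [div_pow, div_pow, hr2, ← add_div, div_self (ne_of_gt hpos)]
    · conv_lhs => rw [Matrix.eta_fin_two M, rot, Matrix.mul_fin_two]
      conv_rhs => rw [Matrix.eta_fin_two M, rot, Matrix.mul_fin_two]
      simp only [Matrix.cons_val', Matrix.cons_val_zero, Matrix.cons_val_one, Matrix.head_cons,
        Matrix.head_fin_const, Matrix.of_apply, Matrix.cons_val_fin_one, Matrix.empty_val']
      field_simp
      ring

/-- key existence: a rotation killing the off-diagonal of a symmetric 2x2 -/
lemma key_exists (p q r : ℝ) :
    ∃ c s : ℝ, c^2 + s^2 = 1 ∧ c*s*(p - r) + q*(c^2 - s^2) = 0 := by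
  rcases eq_or_ne q 0 with hq | hq
  · exact ⟨1, 0, by norm_num, by rw [hq]; ring⟩
  · have hL2 : (Real.sqrt ((p - r)^2 + 4*q^2))^2 = (p - r)^2 + 4*q^2 :=
      Real.sq_sqrt (by positivity)
    set L := Real.sqrt ((p - r)^2 + 4*q^2) with hLdef
    have hchar : ((p+r+L)/2 - p)*((p+r+L)/2 - r) = q^2 := by linear_combination hL2 / 4
    have hq2 : 0 < q^2 := by positivity
    have hn2 : (Real.sqrt (((p+r+L)/2 - p)^2 + q^2))^2 = ((p+r+L)/2 - p)^2 + q^2 :=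
      Real.sq_sqrt (by positivity)
    have hnpos : 0 < Real.sqrt (((p+r+L)/2 - p)^2 + q^2) :=
      Real.sqrt_pos.mpr (by nlinarith)
    set n := Real.sqrt (((p+r+L)/2 - p)^2 + q^2) with hndef
    have hnne : n ≠ 0 := ne_of_gt hnpos
    refine ⟨((p+r+L)/2 - p)/n, q/n, ?_, ?_⟩
    · rw [div_pow, div_pow, ← add_div, ← hn2, div_self (pow_ne_zero 2 hnne)]
    · have e : (((p+r+L)/2 - p)/n)*(q/n)*(p - r) +
          q*((((p+r+L)/2 - p)/n)^2 - (q/n)^2) =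
          (q*((p+r+L)/2 - p)*(p - r) + q*(((p+r+L)/2 - p)^2 - q^2))/n^2 := by
        field_simp
      rw [e]
      have h0 : q*((p+r+L)/2 - p)*(p - r) + q*(((p+r+L)/2 - p)^2 - q^2) = 0 := by
        linear_combination q * hchar
      rw [h0, zero_div]

/-- diagonalization of a symmetric 2x2 matrix by a rotation -/
lemma diag_step (N : Matrix (Fin 2) (Fin 2) ℝ) (hs : N 0 1 = N 1 0) :
    ∃ c s : ℝ, c^2 + s^2 = 1 ∧ (rot c s * N * (rot c s)ᵀ) 0 1 = 0 ∧
      (rot c s * N * (rot c s)ᵀ) 1 0 = 0 := by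
  obtain ⟨c, s, hsum, hkey⟩ := key_exists (N 0 0) (N 0 1) (N 1 1)
  refine ⟨c, s, hsum, ?_, ?_⟩ <;>
    rw [Matrix.eta_fin_two N, rot, trans2, Matrix.mul_fin_two, Matrix.mul_fin_two] <;>
    simp only [Matrix.cons_val', Matrix.cons_val_zero, Matrix.cons_val_one, Matrix.head_cons,
      Matrix.head_fin_const, Matrix.of_apply, Matrix.cons_val_fin_one, Matrix.empty_val']
  · linear_combination hkey + s^2 * hs
  · linear_combination hkey - c^2 * hs

/-- one-mode Williamson normal form -/
lemma will2 (p q r : ℝ) (hp : 0 < p) (hD : 0 < p*r - q^2) :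
    ∃ S : Matrix (Fin 2) (Fin 2) ℝ, S.det = 1 ∧
      S * !![p,q;q,r] * Sᵀ = Real.sqrt (p*r - q^2) • (1 : Matrix (Fin 2) (Fin 2) ℝ) := by
  have hd2 : (Real.sqrt (p*r - q^2))^2 = p*r - q^2 := Real.sq_sqrt hD.le
  have hdpos : 0 < Real.sqrt (p*r - q^2) := Real.sqrt_pos.mpr hD
  set d := Real.sqrt (p*r - q^2) with hddef
  have hk2 : (Real.sqrt (p*d))^2 = p*d := Real.sq_sqrt (by positivity)
  have hkpos : 0 < Real.sqrt (p*d) := Real.sqrt_pos.mpr (by positivity)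
  set k := Real.sqrt (p*d) with hkdef
  have hkne : k ≠ 0 := ne_of_gt hkpos
  refine ⟨k⁻¹ • !![d,0;-q,p], ?_, ?_⟩
  · rw [Matrix.det_smul, Matrix.det_fin_two_of]
    have e : k⁻¹ ^ Fintype.card (Fin 2) * (d*p - 0*(-q)) = (p*d) * (k⁻¹*k⁻¹) := by
      rw [show (Fintype.card (Fin 2)) = 2 from rfl]
      ring
    rw [e, ← hk2]
    have e2 : k^2 * (k⁻¹*k⁻¹) = (k*k⁻¹)*(k*k⁻¹) := by ring
    rw [e2, mul_inv_cancel₀ hkne]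
    ring
  · have h1 : (k⁻¹ • !![d,0;-q,p]) * !![p,q;q,r] * (k⁻¹ • !![d,0;-q,p])ᵀ
        = (k⁻¹*k⁻¹) • (!![d,0;-q,p] * !![p,q;q,r] * !![d,-q;0,p]) := by
      rw [Matrix.transpose_smul, trans2, Matrix.smul_mul, Matrix.smul_mul,
        Matrix.mul_smul, smul_smul]
    rw [h1]
    have h2 : !![d,0;-q,p] * !![p,q;q,r] * !![d,-q;0,p]
        = ((p*r - q^2)*p) • (1 : Matrix (Fin 2) (Fin 2) ℝ) := by
      rw [Matrix.mul_fin_two, Matrix.mul_fin_two]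
      ext i j
      fin_cases i <;> fin_cases j
      · simp [Matrix.smul_apply]
        linear_combination p * hd2
      · simp [Matrix.smul_apply]
        ring
      · simp [Matrix.smul_apply]
        exact Or.inl (by ring)
      · simp [Matrix.smul_apply]
        ring
    rw [h2, smul_smul]
    have h3 : (p*r - q^2)*p = d * k^2 := by rw [hk2]; linear_combination (-p)*hd2
    have hkk : k⁻¹ * k⁻¹ * (d * k^2) = d := by
      have e : k⁻¹ * k⁻¹ * (d * k^2) = d * (k * k⁻¹) * (k * k⁻¹) := by ring
      rw [e, mul_inv_cancel₀ hkne]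
      ring
    rw [h3, hkk]

/-- 2x2 real SVD by rotations -/
lemma svd2 (M : Matrix (Fin 2) (Fin 2) ℝ) :
    ∃ R₁ R₂ : Matrix (Fin 2) (Fin 2) ℝ, R₁*R₁ᵀ = 1 ∧ R₂*R₂ᵀ = 1 ∧
      R₁.det = 1 ∧ R₂.det = 1 ∧ (R₁*M*R₂ᵀ) 0 1 = 0 ∧ (R₁*M*R₂ᵀ) 1 0 = 0 := by
  obtain ⟨c1, s1, h1, hsym⟩ := sym_step M
  obtain ⟨c2, s2, h2, e01, e10⟩ := diag_step (rot c1 s1 * M) hsym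
  refine ⟨rot c2 s2 * rot c1 s1, rot c2 s2, ?_, rot_orth h2, ?_, rot_det h2, ?_, ?_⟩
  · rw [Matrix.transpose_mul, Matrix.mul_assoc, ← Matrix.mul_assoc (rot c1 s1),
      rot_orth h1, Matrix.one_mul, rot_orth h2]
  · rw [Matrix.det_mul, rot_det h2, rot_det h1, mul_one]
  · rw [Matrix.mul_assoc (rot c2 s2)]
    exact e01
  · rw [Matrix.mul_assoc (rot c2 s2)]
    exact e10

def emb (A C C' B : Matrix (Fin 2) (Fin 2) ℝ) : Matrix (Fin 4) (Fin 4) ℝ :=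
  !![A 0 0, A 0 1, C 0 0, C 0 1;
     A 1 0, A 1 1, C 1 0, C 1 1;
     C' 0 0, C' 0 1, B 0 0, B 0 1;
     C' 1 0, C' 1 1, B 1 0, B 1 1]

lemma emb_eta (Γ : Matrix (Fin 4) (Fin 4) ℝ) :
    Γ = emb !![Γ 0 0, Γ 0 1; Γ 1 0, Γ 1 1] !![Γ 0 2, Γ 0 3; Γ 1 2, Γ 1 3]
          !![Γ 2 0, Γ 2 1; Γ 3 0, Γ 3 1] !![Γ 2 2, Γ 2 3; Γ 3 2, Γ 3 3] := by
  ext i j; fin_cases i <;> fin_cases j <;> simp [emb]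

lemma twoDirSum_transpose (T₁ T₂ : Matrix (Fin 2) (Fin 2) ℝ) :
    (twoDirSum T₁ T₂)ᵀ = twoDirSum T₁ᵀ T₂ᵀ := by
  ext i j; fin_cases i <;> fin_cases j <;> simp [twoDirSum, vecHead, vecTail]

set_option maxHeartbeats 1000000 in
lemma conj_blocks (T₁ T₂ A C C' B : Matrix (Fin 2) (Fin 2) ℝ) :
    twoDirSum T₁ T₂ * emb A C C' B * (twoDirSum T₁ T₂)ᵀ =
      emb (T₁*A*T₁ᵀ) (T₁*C*T₂ᵀ) (T₂*C'*T₁ᵀ) (T₂*B*T₂ᵀ) := by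
  rw [twoDirSum_transpose]
  ext i j
  fin_cases i <;> fin_cases j <;>
    simp [twoDirSum, emb, Matrix.mul_apply, Fin.sum_univ_four, Fin.sum_univ_two,
      Matrix.transpose_apply, vecHead, vecTail] <;> ring

lemma quadA (Γ : Matrix (Fin 4) (Fin 4) ℝ)
    (hH : (Γ.map (Complex.ofReal) + Complex.I • (symplForm 4).map Complex.ofReal).PosSemidef)
    (hsym : Γ 1 0 = Γ 0 1) (t s : ℝ) :
    0 ≤ Γ 0 0 * t^2 + 2*t*(Γ 0 1 * s - 1) + Γ 1 1 * (s^2+1) := by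
  have h := hH.dotProduct_mulVec_nonneg ![(t:ℂ), (s:ℂ) + Complex.I, 0, 0]
  have key : (star ![(t:ℂ), (s:ℂ) + Complex.I, 0, 0]) ⬝ᵥ
      ((Γ.map (Complex.ofReal) + Complex.I • (symplForm 4).map Complex.ofReal) *ᵥ
        ![(t:ℂ), (s:ℂ) + Complex.I, 0, 0]) =
      ((Γ 0 0 * t^2 + 2*t*(Γ 0 1 * s - 1) + Γ 1 1 * (s^2+1) : ℝ) : ℂ) := by
    simp [dotProduct, Matrix.mulVec, Fin.sum_univ_four, symplForm_four,
      Matrix.map_apply, Matrix.add_apply, Matrix.smul_apply, Complex.ext_iff, hsym]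
    simp only [← Complex.ofReal_pow, Complex.ofReal_re, Complex.ofReal_im]
    constructor <;> ring
  rw [key] at h
  exact Complex.zero_le_real.mp h

lemma quadB (Γ : Matrix (Fin 4) (Fin 4) ℝ)
    (hH : (Γ.map (Complex.ofReal) + Complex.I • (symplForm 4).map Complex.ofReal).PosSemidef)
    (hsym : Γ 3 2 = Γ 2 3) (t s : ℝ) :
    0 ≤ Γ 2 2 * t^2 + 2*t*(Γ 2 3 * s - 1) + Γ 3 3 * (s^2+1) := by
  have h := hH.dotProduct_mulVec_nonneg ![0, 0, (t:ℂ), (s:ℂ) + Complex.I]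
  have key : (star ![0, 0, (t:ℂ), (s:ℂ) + Complex.I]) ⬝ᵥ
      ((Γ.map (Complex.ofReal) + Complex.I • (symplForm 4).map Complex.ofReal) *ᵥ
        ![0, 0, (t:ℂ), (s:ℂ) + Complex.I]) =
      ((Γ 2 2 * t^2 + 2*t*(Γ 2 3 * s - 1) + Γ 3 3 * (s^2+1) : ℝ) : ℂ) := by
    simp [dotProduct, Matrix.mulVec, Fin.sum_univ_four, symplForm_four,
      Matrix.map_apply, Matrix.add_apply, Matrix.smul_apply, Complex.ext_iff, hsym]
    simp only [← Complex.ofReal_pow, Complex.ofReal_re, Complex.ofReal_im]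
    constructor <;> ring
  rw [key] at h
  exact Complex.zero_le_real.mp h

lemma pos_of_quad (p q r : ℝ)
    (H : ∀ t s : ℝ, 0 ≤ p*t^2 + 2*t*(q*s - 1) + r*(s^2+1)) :
    0 < p ∧ 0 < p*r - q^2 := by
  have hr0 : 0 ≤ r := by have := H 0 0; nlinarith
  have hp : 0 < p := by have h1 := H (r+1) 0; nlinarith
  refine ⟨hp, ?_⟩
  have hpne : p ≠ 0 := ne_of_gt hp
  have hf : ∀ s : ℝ, 0 ≤ (p*r - q^2)*s^2 + 2*q*s + (p*r - 1) := by
    intro s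
    have h2 := H ((1 - q*s)/p) s
    have e : p*((1 - q*s)/p)^2 + 2*((1 - q*s)/p)*(q*s - 1) + r*(s^2+1)
        = ((p*r - q^2)*s^2 + 2*q*s + (p*r - 1))/p := by
      field_simp
      ring
    rw [e] at h2
    have h3 := mul_nonneg h2 hp.le
    rwa [div_mul_cancel₀ _ hpne] at h3
  rcases eq_or_ne q 0 with hq | hq
  · have h4 := hf 0
    rw [hq] at h4 ⊢
    nlinarith
  · by_contra hD
    push_neg at hD
    have h3 := hf (-(p*r)/(2*q))
    have h4 : 2*q*(-(p*r)/(2*q)) = -(p*r) := by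
      field_simp
    nlinarith [sq_nonneg (-(p*r)/(2*q)),
      mul_nonneg (sq_nonneg (-(p*r)/(2*q))) (neg_nonneg.mpr hD)]

/-- Simon normal form of a two-mode covariance matrix. -/
theorem simon_normal_form (Γ : Matrix (Fin 4) (Fin 4) ℝ) (hΓ : IsCovMatrix Γ) :
    ∃ (S₁ S₂ : Matrix (Fin 2) (Fin 2) ℝ) (a b c d : ℝ),
      IsSymplectic S₁ ∧ IsSymplectic S₂ ∧
      twoDirSum S₁ S₂ * Γ * (twoDirSum S₁ S₂)ᵀ =
        !![a, 0, c, 0; 0, a, 0, d; c, 0, b, 0; 0, d, 0, b] := by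
  obtain ⟨hsymm, hpsd⟩ := hΓ
  have h01 : Γ 1 0 = Γ 0 1 := hsymm.apply 0 1
  have h23 : Γ 3 2 = Γ 2 3 := hsymm.apply 2 3
  have h02 : Γ 2 0 = Γ 0 2 := hsymm.apply 0 2
  have h12 : Γ 2 1 = Γ 1 2 := hsymm.apply 1 2
  have h03 : Γ 3 0 = Γ 0 3 := hsymm.apply 0 3
  have h13 : Γ 3 1 = Γ 1 3 := hsymm.apply 1 3
  obtain ⟨hpA, hDA⟩ := pos_of_quad (Γ 0 0) (Γ 0 1) (Γ 1 1) (quadA Γ hpsd h01)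
  obtain ⟨hpB, hDB⟩ := pos_of_quad (Γ 2 2) (Γ 2 3) (Γ 3 3) (quadB Γ hpsd h23)
  obtain ⟨S₁, hdet1, hS1⟩ := will2 (Γ 0 0) (Γ 0 1) (Γ 1 1) hpA hDA
  obtain ⟨S₂, hdet2, hS2⟩ := will2 (Γ 2 2) (Γ 2 3) (Γ 3 3) hpB hDB
  obtain ⟨R₁, R₂, ho1, ho2, hr1, hr2, e01, e10⟩ :=
    svd2 (S₁ * !![Γ 0 2, Γ 0 3; Γ 1 2, Γ 1 3] * S₂ᵀ)
  refine ⟨R₁ * S₁, R₂ * S₂,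
    Real.sqrt (Γ 0 0 * Γ 1 1 - Γ 0 1^2), Real.sqrt (Γ 2 2 * Γ 3 3 - Γ 2 3^2),
    (R₁ * (S₁ * !![Γ 0 2, Γ 0 3; Γ 1 2, Γ 1 3] * S₂ᵀ) * R₂ᵀ) 0 0,
    (R₁ * (S₁ * !![Γ 0 2, Γ 0 3; Γ 1 2, Γ 1 3] * S₂ᵀ) * R₂ᵀ) 1 1,
    symp_of_det _ (by rw [Matrix.det_mul, hr1, hdet1, mul_one]),
    symp_of_det _ (by rw [Matrix.det_mul, hr2, hdet2, mul_one]), ?_⟩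
  have hA : (R₁*S₁) * !![Γ 0 0, Γ 0 1; Γ 1 0, Γ 1 1] * (R₁*S₁)ᵀ
      = Real.sqrt (Γ 0 0 * Γ 1 1 - Γ 0 1^2) • (1 : Matrix (Fin 2) (Fin 2) ℝ) := by
    rw [h01, Matrix.transpose_mul]
    have e : R₁*S₁ * !![Γ 0 0, Γ 0 1; Γ 0 1, Γ 1 1] * (S₁ᵀ*R₁ᵀ)
        = R₁*(S₁ * !![Γ 0 0, Γ 0 1; Γ 0 1, Γ 1 1] * S₁ᵀ)*R₁ᵀ := by
      simp only [Matrix.mul_assoc]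
    rw [e, hS1, Matrix.mul_smul, Matrix.mul_one, Matrix.smul_mul, ho1]
  have hB : (R₂*S₂) * !![Γ 2 2, Γ 2 3; Γ 3 2, Γ 3 3] * (R₂*S₂)ᵀ
      = Real.sqrt (Γ 2 2 * Γ 3 3 - Γ 2 3^2) • (1 : Matrix (Fin 2) (Fin 2) ℝ) := by
    rw [h23, Matrix.transpose_mul]
    have e : R₂*S₂ * !![Γ 2 2, Γ 2 3; Γ 2 3, Γ 3 3] * (S₂ᵀ*R₂ᵀ)
        = R₂*(S₂ * !![Γ 2 2, Γ 2 3; Γ 2 3, Γ 3 3] * S₂ᵀ)*R₂ᵀ := by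
      simp only [Matrix.mul_assoc]
    rw [e, hS2, Matrix.mul_smul, Matrix.mul_one, Matrix.smul_mul, ho2]
  have hC : (R₁*S₁) * !![Γ 0 2, Γ 0 3; Γ 1 2, Γ 1 3] * (R₂*S₂)ᵀ
      = !![(R₁ * (S₁ * !![Γ 0 2, Γ 0 3; Γ 1 2, Γ 1 3] * S₂ᵀ) * R₂ᵀ) 0 0, 0;
           0, (R₁ * (S₁ * !![Γ 0 2, Γ 0 3; Γ 1 2, Γ 1 3] * S₂ᵀ) * R₂ᵀ) 1 1] := by
    have e : (R₁*S₁) * !![Γ 0 2, Γ 0 3; Γ 1 2, Γ 1 3] * (R₂*S₂)ᵀ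
        = R₁ * (S₁ * !![Γ 0 2, Γ 0 3; Γ 1 2, Γ 1 3] * S₂ᵀ) * R₂ᵀ := by
      rw [Matrix.transpose_mul]
      simp only [Matrix.mul_assoc]
    rw [e]
    conv_lhs => rw [Matrix.eta_fin_two (R₁ * (S₁ * !![Γ 0 2, Γ 0 3; Γ 1 2, Γ 1 3] * S₂ᵀ) * R₂ᵀ)]
    rw [e01, e10]
  have hC' : (R₂*S₂) * !![Γ 2 0, Γ 2 1; Γ 3 0, Γ 3 1] * (R₁*S₁)ᵀ
      = !![(R₁ * (S₁ * !![Γ 0 2, Γ 0 3; Γ 1 2, Γ 1 3] * S₂ᵀ) * R₂ᵀ) 0 0, 0;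
           0, (R₁ * (S₁ * !![Γ 0 2, Γ 0 3; Γ 1 2, Γ 1 3] * S₂ᵀ) * R₂ᵀ) 1 1] := by
    have hCt : !![Γ 2 0, Γ 2 1; Γ 3 0, Γ 3 1] = (!![Γ 0 2, Γ 0 3; Γ 1 2, Γ 1 3])ᵀ := by
      rw [trans2, h02, h12, h03, h13]
    rw [hCt]
    have e : (R₂*S₂) * (!![Γ 0 2, Γ 0 3; Γ 1 2, Γ 1 3])ᵀ * (R₁*S₁)ᵀ
        = ((R₁*S₁) * !![Γ 0 2, Γ 0 3; Γ 1 2, Γ 1 3] * (R₂*S₂)ᵀ)ᵀ := by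
      simp only [Matrix.transpose_mul, Matrix.transpose_transpose, Matrix.mul_assoc]
    rw [e, hC, trans2]
  calc twoDirSum (R₁*S₁) (R₂*S₂) * Γ * (twoDirSum (R₁*S₁) (R₂*S₂))ᵀ
      = twoDirSum (R₁*S₁) (R₂*S₂) *
          emb !![Γ 0 0, Γ 0 1; Γ 1 0, Γ 1 1] !![Γ 0 2, Γ 0 3; Γ 1 2, Γ 1 3]
              !![Γ 2 0, Γ 2 1; Γ 3 0, Γ 3 1] !![Γ 2 2, Γ 2 3; Γ 3 2, Γ 3 3] *
          (twoDirSum (R₁*S₁) (R₂*S₂))ᵀ := by rw [← emb_eta]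
    _ = emb ((R₁*S₁) * !![Γ 0 0, Γ 0 1; Γ 1 0, Γ 1 1] * (R₁*S₁)ᵀ)
            ((R₁*S₁) * !![Γ 0 2, Γ 0 3; Γ 1 2, Γ 1 3] * (R₂*S₂)ᵀ)
            ((R₂*S₂) * !![Γ 2 0, Γ 2 1; Γ 3 0, Γ 3 1] * (R₁*S₁)ᵀ)
            ((R₂*S₂) * !![Γ 2 2, Γ 2 3; Γ 3 2, Γ 3 3] * (R₂*S₂)ᵀ) :=
        conj_blocks _ _ _ _ _ _
    _ = _ := by
        rw [hA, hB, hC, hC']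
        ext i j
        fin_cases i <;> fin_cases j <;>
          simp [emb, Matrix.smul_apply, Matrix.one_apply]

end
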